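/- Let G be a group, {x_i | i ∈ I} a finite set of elements of G, and {H_i | i ∈ I} a finite set of subgroups with H_i ≤ C_G(x_i) for each i. If each H_i is a separable subgroup of G, then the quandle ⊔_{i∈I} (G/H_i, x_i), with operation H_i u * H_j v = H_i x_i⁻¹ u v⁻¹ x_j v, is a residually finite quandle. -/
import Mathlib


variable {I : Type*} {G : Type*} [Group G]

/-- The quandle `⊔_{i ∈ I} (G/H_i, x_i)` on the disjoint union of the right-coset spaces of
subgroups `H_i ≤ C_G(x_i)`, with operation `H_i u * H_j v = H_i (x_i⁻¹ u v⁻¹ x_j v)`.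
(In Mathlib's left-action convention `Shelf.act b a` is the paper's `a * b`.) -/
def unionCosetQuandle (x : I → G) (H : I → Subgroup G)
    (hc : ∀ i, ∀ h ∈ H i, h * x i = x i * h) :
    Quandle (Σ i, Quotient (QuotientGroup.rightRel (H i))) where
  act b a :=
    ⟨a.1, Quotient.liftOn b.2
      (fun v => Quotient.liftOn a.2
        (fun u => Quotient.mk (QuotientGroup.rightRel (H a.1))
          ((x a.1)⁻¹ * u * (v⁻¹ * x b.1 * v)))
        (by
          intro u₁ u₂ hu
          have hu' : u₂ * u₁⁻¹ ∈ H a.1 := QuotientGroup.rightRel_apply.mp hu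
          have hcom : Commute (u₂ * u₁⁻¹) (x a.1) := hc a.1 _ hu'
          refine Quotient.sound (QuotientGroup.rightRel_apply.mpr ?_)
          have key : ((x a.1)⁻¹ * u₂ * (v⁻¹ * x b.1 * v)) *
              ((x a.1)⁻¹ * u₁ * (v⁻¹ * x b.1 * v))⁻¹ =
              (x a.1)⁻¹ * ((u₂ * u₁⁻¹) * x a.1) := by group
          rw [key, hcom.eq, inv_mul_cancel_left]
          exact hu'))
      (by
        intro v₁ v₂ hv
        have hcom : Commute (v₂ * v₁⁻¹) (x b.1) :=
          hc b.1 _ (QuotientGroup.rightRel_apply.mp hv)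
        induction a.2 using Quotient.inductionOn with
        | h u =>
          simp only [Quotient.liftOn_mk]
          apply congrArg
          have key : v₂⁻¹ * x b.1 * v₂ = v₁⁻¹ * x b.1 * v₁ := by
            conv_lhs => rw [show v₂ = (v₂ * v₁⁻¹) * v₁ by group]
            calc ((v₂ * v₁⁻¹) * v₁)⁻¹ * x b.1 * ((v₂ * v₁⁻¹) * v₁)
                = v₁⁻¹ * ((v₂ * v₁⁻¹)⁻¹ * x b.1 * (v₂ * v₁⁻¹)) * v₁ := by group
              _ = v₁⁻¹ * x b.1 * v₁ := by rw [hcom.inv_left.eq]; group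
          rw [key])⟩
  self_distrib := by
    rintro ⟨k, w⟩ ⟨j, v⟩ ⟨i, u⟩
    induction w using Quotient.inductionOn with
    | h w =>
      induction v using Quotient.inductionOn with
      | h v =>
        induction u using Quotient.inductionOn with
        | h u =>
          apply congrArg (Sigma.mk i)
          exact congrArg (Quotient.mk (QuotientGroup.rightRel (H i))) (by group)
  invAct b a :=
    ⟨a.1, Quotient.liftOn b.2
      (fun v => Quotient.liftOn a.2
        (fun u => Quotient.mk (QuotientGroup.rightRel (H a.1))
          (x a.1 * u * (v⁻¹ * (x b.1)⁻¹ * v)))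
        (by
          intro u₁ u₂ hu
          have hu' : u₂ * u₁⁻¹ ∈ H a.1 := QuotientGroup.rightRel_apply.mp hu
          have hcom : Commute (u₂ * u₁⁻¹) (x a.1) := hc a.1 _ hu'
          refine Quotient.sound (QuotientGroup.rightRel_apply.mpr ?_)
          have key : (x a.1 * u₂ * (v⁻¹ * (x b.1)⁻¹ * v)) *
              (x a.1 * u₁ * (v⁻¹ * (x b.1)⁻¹ * v))⁻¹ =
              x a.1 * ((u₂ * u₁⁻¹) * (x a.1)⁻¹) := by group
          rw [key, hcom.inv_right.eq, mul_inv_cancel_left]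
          exact hu'))
      (by
        intro v₁ v₂ hv
        have hcom : Commute (v₂ * v₁⁻¹) (x b.1) :=
          hc b.1 _ (QuotientGroup.rightRel_apply.mp hv)
        induction a.2 using Quotient.inductionOn with
        | h u =>
          simp only [Quotient.liftOn_mk]
          apply congrArg
          have key : v₂⁻¹ * (x b.1)⁻¹ * v₂ = v₁⁻¹ * (x b.1)⁻¹ * v₁ := by
            conv_lhs => rw [show v₂ = (v₂ * v₁⁻¹) * v₁ by group]
            calc ((v₂ * v₁⁻¹) * v₁)⁻¹ * (x b.1)⁻¹ * ((v₂ * v₁⁻¹) * v₁)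
                = v₁⁻¹ * ((v₂ * v₁⁻¹)⁻¹ * (x b.1)⁻¹ * (v₂ * v₁⁻¹)) * v₁ := by group
              _ = v₁⁻¹ * (x b.1)⁻¹ * v₁ := by rw [hcom.inv_right.inv_left.eq]; group
          rw [key])⟩
  left_inv := by
    rintro ⟨j, v⟩ ⟨i, u⟩
    induction v using Quotient.inductionOn with
    | h v =>
      induction u using Quotient.inductionOn with
      | h u =>
        apply congrArg (Sigma.mk i)
        exact congrArg (Quotient.mk (QuotientGroup.rightRel (H i))) (by group)
  right_inv := by
    rintro ⟨j, v⟩ ⟨i, u⟩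
    induction v using Quotient.inductionOn with
    | h v =>
      induction u using Quotient.inductionOn with
      | h u =>
        apply congrArg (Sigma.mk i)
        exact congrArg (Quotient.mk (QuotientGroup.rightRel (H i))) (by group)
  fix := by
    rintro ⟨i, u⟩
    induction u using Quotient.inductionOn with
    | h u =>
      apply congrArg (Sigma.mk i)
      exact congrArg (Quotient.mk (QuotientGroup.rightRel (H i))) (by group)

/-- A quandle `X` is *residually finite* if any two distinct elements of `X` can be separated
by a quandle homomorphism into a finite quandle. -/
def QuandleResiduallyFinite (X : Type*) [Quandle X] : Prop :=
  ∀ x y : X, x ≠ y →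
    ∃ (F : Type) (_ : Quandle F) (_ : Finite F) (φ : ShelfHom X F), φ x ≠ φ y

/-- A subgroup `H` of a group `G` is *separable* in `G` if for each `x ∈ G \ H` there is a
finite group `F` and a group homomorphism `φ : G →* F` with `φ x ∉ φ '' H`. -/
def SubgroupSeparable (H : Subgroup G) : Prop :=
  ∀ x : G, x ∉ H →
    ∃ (F : Type) (_ : Group F) (_ : Finite F) (φ : G →* F), φ x ∉ φ '' (H : Set G)

/-- The trivial quandle structure on a type, `a * b = b`. -/
def trivialQuandle (X : Type*) : Quandle X where
  act _ a := a
  self_distrib := by intros; rfl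
  invAct _ a := a
  left_inv := by intro _ _; rfl
  right_inv := by intro _ _; rfl
  fix := by intros; rfl

/-- Let `{x_i | i ∈ I}` be a finite set of elements of a group `G` and `{H_i | i ∈ I}` a
finite set of subgroups with `H_i ≤ C_G(x_i)`.  If each `H_i` is a separable subgroup of `G`,
then the quandle `⊔_{i ∈ I} (G/H_i, x_i)` is residually finite. -/
theorem unionCosetQuandle_residuallyFinite [Finite I] (x : I → G) (H : I → Subgroup G)
    (hc : ∀ i, ∀ h ∈ H i, h * x i = x i * h)
    (hsep : ∀ i, SubgroupSeparable (H i)) :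
    @QuandleResiduallyFinite (Σ i, Quotient (QuotientGroup.rightRel (H i)))
      (unionCosetQuandle x H hc) := by
  classical
  letI : Quandle (Σ i, Quotient (QuotientGroup.rightRel (H i))) := unionCosetQuandle x H hc
  rintro ⟨i, u⟩ ⟨j, v⟩ hne
  by_cases hij : i = j
  · -- same index: separate using subgroup separability
    subst hij
    have huv : u ≠ v := fun h => hne (by rw [h])
    induction u using Quotient.inductionOn with
    | h u =>
    induction v using Quotient.inductionOn with
    | h v =>
    have hmem : v * u⁻¹ ∉ H i := fun hm =>
      huv (Quotient.sound (QuotientGroup.rightRel_apply.mpr hm))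
    obtain ⟨F, _, _, φ, hφ⟩ := hsep i (v * u⁻¹) hmem
    obtain ⟨n, ⟨e⟩⟩ := Finite.exists_equiv_fin I
    set x' : Fin n → F := fun k => φ (x (e.symm k)) with hx'
    set H' : Fin n → Subgroup F := fun k => (H (e.symm k)).map φ with hH'
    have hc' : ∀ k, ∀ h ∈ H' k, h * x' k = x' k * h := by
      rintro k _ ⟨g, hg, rfl⟩
      simp only [hx', ← map_mul, hc _ g hg]
    letI : Quandle (Σ k, Quotient (QuotientGroup.rightRel (H' k))) :=
      unionCosetQuandle x' H' hc'
    refine ⟨Σ k, Quotient (QuotientGroup.rightRel (H' k)),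
      unionCosetQuandle x' H' hc', inferInstance, ?_, ?_⟩
    · -- the induced shelf homomorphism
      refine ⟨fun a => ⟨e a.1, Quotient.liftOn a.2
        (fun g => Quotient.mk (QuotientGroup.rightRel (H' (e a.1))) (φ g)) ?_⟩, ?_⟩
      · intro g₁ g₂ hg
        refine Quotient.sound (QuotientGroup.rightRel_apply.mpr ?_)
        have hm : g₂ * g₁⁻¹ ∈ H a.1 := QuotientGroup.rightRel_apply.mp hg
        refine ⟨g₂ * g₁⁻¹, by simpa using hm, by simp⟩
      · rintro ⟨p, w⟩ ⟨q, z⟩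
        induction w using Quotient.inductionOn with
        | h w =>
        induction z using Quotient.inductionOn with
        | h z =>
        refine congrArg (Sigma.mk (e q)) (congrArg
          (Quotient.mk (QuotientGroup.rightRel (H' (e q)))) ?_)
        simp [hx', map_mul, map_inv]
    · -- separation
      intro h
      have h2 : (Quotient.mk (QuotientGroup.rightRel (H' (e i))) (φ u)) =
          (Quotient.mk (QuotientGroup.rightRel (H' (e i))) (φ v)) :=
        eq_of_heq (Sigma.mk.inj_iff.mp h).2
      have h3 : φ v * (φ u)⁻¹ ∈ H' (e i) :=
        QuotientGroup.rightRel_apply.mp (Quotient.exact h2)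
      rw [hH'] at h3
      simp only [Equiv.symm_apply_apply] at h3
      obtain ⟨g, hg, hgeq⟩ := h3
      exact hφ ⟨g, hg, by rw [hgeq]; simp [map_mul, map_inv]⟩
  · -- different indices: separate via the index map to a trivial quandle
    letI : Quandle Bool := trivialQuandle Bool
    refine ⟨Bool, trivialQuandle Bool, inferInstance,
      ⟨fun a => decide (a.1 = i), by intro a b; rfl⟩, ?_⟩
    show decide (i = i) ≠ decide (j = i)
    simp [decide_eq_decide, eq_comm, hij]
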